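/- Let t ∈ ℝ with t ≥ 4. Define x₁ = √((t² + t·√(t² − 16))/2), x₂ = √((t² − t·√(t² − 16))/2), x₃ = (x₂² + 1)/x₁ and x₄ = (x₃² + 1)/x₂. Then x₁x₄ − x₂x₃ = ½(t + t⁻¹). -/

import Mathlib

/-!
Along the exchange relations `x₁x₃ = x₂² + 1`, `x₂x₄ = x₃² + 1` the quantity
`x₁x₄ − x₂x₃` is the rank-two Markov-type invariant `(x₁² + x₂² + 1)/(x₁x₂)`.
The initial cluster is chosen so that `x₁²` and `x₂²` are the roots of `X² − t²X + 4t²`,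
i.e. `x₁² + x₂² = t²` and `x₁x₂ = 2t`, and the invariant becomes `(t² + 1)/(2t)`.
-/

theorem exchange_invariant_mul {R : Type*} [CommRing R] {x₁ x₂ x₃ x₄ : R}
    (h₃ : x₁ * x₃ = x₂ ^ 2 + 1) (h₄ : x₂ * x₄ = x₃ ^ 2 + 1) :
    (x₁ * x₄ - x₂ * x₃) * (x₁ * x₂) = x₁ ^ 2 + x₂ ^ 2 + 1 := by
  linear_combination x₁ ^ 2 * h₄ + (x₁ * x₃ + 1) * h₃

theorem exchange_invariant {K : Type*} [Field K] {x₁ x₂ x₃ x₄ : K}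
    (h₁ : x₁ ≠ 0) (h₂ : x₂ ≠ 0)
    (hx₃ : x₃ = (x₂ ^ 2 + 1) / x₁) (hx₄ : x₄ = (x₃ ^ 2 + 1) / x₂) :
    x₁ * x₄ - x₂ * x₃ = (x₁ ^ 2 + x₂ ^ 2 + 1) / (x₁ * x₂) := by
  rw [eq_div_iff (mul_ne_zero h₁ h₂)]
  apply exchange_invariant_mul
  · rw [hx₃, mul_div_cancel₀ _ h₁]
  · rw [hx₄, mul_div_cancel₀ _ h₂]

namespace Real

theorem sq_sqrt_half_add_add_sq_sqrt_half_sub {a b : ℝ} (h : |b| ≤ a) :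
    √((a + b) / 2) ^ 2 + √((a - b) / 2) ^ 2 = a := by
  obtain ⟨hb₁, hb₂⟩ := abs_le.mp h
  rw [sq_sqrt (by linarith), sq_sqrt (by linarith)]
  ring

theorem sqrt_half_add_mul_sqrt_half_sub {a b : ℝ} (h : 0 ≤ a + b) :
    √((a + b) / 2) * √((a - b) / 2) = √((a ^ 2 - b ^ 2) / 4) := by
  rw [← sqrt_mul (by linarith)]
  ring_nf

end Real

section Modulus

variable {t : ℝ}

theorem abs_mul_sqrt_sq_sub_sixteen_le_sq (ht : 4 ≤ t) : |t * √(t ^ 2 - 16)| ≤ t ^ 2 := by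
  have hs : √(t ^ 2 - 16) ≤ t := by
    rw [Real.sqrt_le_left (by linarith)]
    linarith
  rw [abs_of_nonneg (by positivity)]
  nlinarith

theorem sqrt_initial_cluster_mul (ht : 4 ≤ t) :
    √((t ^ 2 + t * √(t ^ 2 - 16)) / 2) * √((t ^ 2 - t * √(t ^ 2 - 16)) / 2) = 2 * t := by
  have hs : √(t ^ 2 - 16) ^ 2 = t ^ 2 - 16 := Real.sq_sqrt (by nlinarith)
  rw [Real.sqrt_half_add_mul_sqrt_half_sub (by positivity),
    Real.sqrt_eq_iff_eq_sq (by nlinarith) (by linarith)]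
  linear_combination (-t ^ 2 / 4) * hs

end Modulus

/-- For a modulus t ≥ 4, the cluster variables x₁ = √((t² + t√(t²−16))/2),
x₂ = √((t² − t√(t²−16))/2) and x₃ = (x₂²+1)/x₁, x₄ = (x₃²+1)/x₂ satisfy the
required equality x₁x₄ − x₂x₃ = ½(t + t⁻¹). -/
theorem cluster_variables_chebyshev_argument (t : ℝ) (ht : 4 ≤ t)
    (x₁ x₂ x₃ x₄ : ℝ)
    (hx₁ : x₁ = Real.sqrt ((t ^ 2 + t * Real.sqrt (t ^ 2 - 16)) / 2))
    (hx₂ : x₂ = Real.sqrt ((t ^ 2 - t * Real.sqrt (t ^ 2 - 16)) / 2))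
    (hx₃ : x₃ = (x₂ ^ 2 + 1) / x₁) (hx₄ : x₄ = (x₃ ^ 2 + 1) / x₂) :
    x₁ * x₄ - x₂ * x₃ = (1 / 2) * (t + t⁻¹) := by
  have ht₀ : t ≠ 0 := by positivity
  have hsum : x₁ ^ 2 + x₂ ^ 2 = t ^ 2 := by
    rw [hx₁, hx₂]
    exact Real.sq_sqrt_half_add_add_sq_sqrt_half_sub (abs_mul_sqrt_sq_sub_sixteen_le_sq ht)
  have hprod : x₁ * x₂ = 2 * t := by
    rw [hx₁, hx₂]
    exact sqrt_initial_cluster_mul ht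
  obtain ⟨h₁, h₂⟩ := mul_ne_zero_iff.mp (hprod ▸ mul_ne_zero two_ne_zero ht₀)
  rw [exchange_invariant h₁ h₂ hx₃ hx₄, hsum, hprod]
  field_simp
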